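/- For all L ≻ 0 and X ∈ R^{m×n}, the choice L = √(β/(2α)) · √(X X^T + εI) in the inequality α tr(L) + (β/2) tr(X^T L^{-1} X) gives a value at most √(2αβ) · tr(√(X X^T + εI)); in particular, inf over L ≻ 0 of α tr(L) + (β/2) tr(X^T L^{-1} X) ≤ √(2αβ) ||X||_* in the limit ε → 0. -/

import Mathlib

open Matrix Finset
open scoped Classical

noncomputable def psqrt {m : ℕ} (A : Matrix (Fin m) (Fin m) ℝ) : Matrix (Fin m) (Fin m) ℝ :=
  if h : A.PosSemidef then
    h.1.eigenvectorUnitary.1 * diagonal (Real.sqrt ∘ h.1.eigenvalues) *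
      (star h.1.eigenvectorUnitary : Matrix (Fin m) (Fin m) ℝ)
  else 0

noncomputable def nuclearNorm {m : ℕ} {n : Type*} [Fintype n]
    (A : Matrix (Fin m) n ℝ) : ℝ :=
  (psqrt (A * Aᵀ)).trace

/-!
With `Q = √(XXᵀ + εI)` we have `XXᵀ = Q² - εI`, so `tr(Xᵀ Q⁻¹ X) = tr Q - ε tr Q⁻¹ ≤ tr Q`.
Hence `L = cQ` gives an objective of at most `(αc + β/(2c)) tr Q`, and `c = √(β/(2α))` makes the
coefficient `√(2αβ)`. For the nuclear norm let `ε → 0⁺`: in an eigenbasis of `XXᵀ` the trace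
`tr √(XXᵀ + εI) = ∑ᵢ √(λᵢ + ε)` is continuous in `ε`.
-/

open Filter Topology

namespace Matrix

variable {ι κ : Type*} [Fintype ι] [DecidableEq ι] [Fintype κ]

theorem IsHermitian.trace_cfc {𝕜 : Type*} [RCLike 𝕜] {A : Matrix ι ι 𝕜} (hA : A.IsHermitian)
    (f : ℝ → ℝ) : (cfc f A).trace = ∑ i, (f (hA.eigenvalues i) : 𝕜) := by
  rw [hA.cfc_eq, IsHermitian.cfc, Unitary.conjStarAlgAut_apply, trace_mul_cycle,
    Unitary.coe_star_mul_self, Matrix.one_mul, trace_diagonal]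
  rfl

theorem trace_transpose_mul_inv_mul_le {X : Matrix ι κ ℝ} {Q : Matrix ι ι ℝ} {ε : ℝ}
    (hQ : Q.PosDef) (hε : 0 ≤ ε) (hQQ : Q * Q = X * Xᵀ + ε • 1) :
    (Xᵀ * Q⁻¹ * X).trace ≤ Q.trace := by
  have hXX : X * Xᵀ * Q⁻¹ = Q - ε • Q⁻¹ := by
    rw [← add_sub_cancel_right (X * Xᵀ) (ε • 1), ← hQQ, Matrix.sub_mul, Matrix.mul_assoc,
      mul_nonsing_inv _ ((isUnit_iff_isUnit_det Q).mp hQ.isUnit), Matrix.mul_one,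
      Matrix.smul_mul, Matrix.one_mul]
  calc (Xᵀ * Q⁻¹ * X).trace = Q.trace - ε * Q⁻¹.trace := by
        rw [trace_mul_cycle, hXX, trace_sub, trace_smul, smul_eq_mul]
    _ ≤ Q.trace := sub_le_self _ (mul_nonneg hε hQ.inv.posSemidef.trace_nonneg)

theorem mul_trace_smul_add_mul_trace_transpose_mul_inv_mul_le {X : Matrix ι κ ℝ}
    {Q : Matrix ι ι ℝ} {ε c α β : ℝ} (hQ : Q.PosDef) (hε : 0 ≤ ε)
    (hQQ : Q * Q = X * Xᵀ + ε • 1) (hc : 0 < c) (hβ : 0 ≤ β) :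
    α * (c • Q).trace + β / 2 * (Xᵀ * (c • Q)⁻¹ * X).trace
      ≤ (α * c + β / 2 * c⁻¹) * Q.trace := by
  have hinv : (c • Q)⁻¹ = c⁻¹ • Q⁻¹ :=
    inv_smul' Q (Units.mk0 c hc.ne') ((isUnit_iff_isUnit_det Q).mp hQ.isUnit)
  rw [hinv, Matrix.mul_smul, Matrix.smul_mul, trace_smul, trace_smul, smul_eq_mul, smul_eq_mul]
  have hcoef : 0 ≤ β / 2 * c⁻¹ := by positivity
  linarith [mul_le_mul_of_nonneg_left (trace_transpose_mul_inv_mul_le hQ hε hQQ) hcoef]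

end Matrix

section psqrt

open scoped MatrixOrder

variable {m : ℕ} {A : Matrix (Fin m) (Fin m) ℝ}

theorem psqrt_eq_sqrt (hA : A.PosSemidef) : psqrt A = CFC.sqrt A := by
  rw [psqrt, dif_pos hA, CFC.sqrt_eq_real_sqrt A hA.nonneg, cfcₙ_eq_cfc, hA.1.cfc_eq]
  simp [IsHermitian.cfc, RCLike.ofReal_real_eq_id]

theorem psqrt_mul_self (hA : A.PosSemidef) : psqrt A * psqrt A = A := by
  rw [psqrt_eq_sqrt hA, CFC.sqrt_mul_sqrt_self A hA.nonneg]

theorem Matrix.PosDef.psqrt (hA : A.PosDef) : (psqrt A).PosDef := by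
  rw [psqrt_eq_sqrt hA.posSemidef, ← isStrictlyPositive_iff_posDef]
  exact IsStrictlyPositive.sqrt A hA.isStrictlyPositive

theorem psqrt_add_smul_one (hA : A.PosSemidef) {ε : ℝ} (hε : 0 ≤ ε) :
    psqrt (A + ε • 1) = cfc (fun x => √(x + ε)) A := by
  have hshift : cfc (fun x => x + ε) A = A + ε • 1 := by
    rw [cfc_add_const ε (fun x => x) A, cfc_id' ℝ A hA.1.isSelfAdjoint,
      Algebra.algebraMap_eq_smul_one]
  have hpsd : (A + ε • 1).PosSemidef := hA.add (PosSemidef.one.smul hε)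
  rw [psqrt_eq_sqrt hpsd, CFC.sqrt_eq_real_sqrt _ hpsd.nonneg, cfcₙ_eq_cfc, ← hshift,
    ← cfc_comp' Real.sqrt (fun x => x + ε) A]

theorem trace_psqrt_add_smul_one (hA : A.PosSemidef) {ε : ℝ} (hε : 0 ≤ ε) :
    (psqrt (A + ε • 1)).trace = ∑ i, √(hA.1.eigenvalues i + ε) := by
  rw [psqrt_add_smul_one hA hε, hA.1.trace_cfc]
  rfl

theorem tendsto_trace_psqrt_add_smul_one (hA : A.PosSemidef) :
    Tendsto (fun ε : ℝ => (psqrt (A + ε • 1)).trace) (𝓝[≥] 0) (𝓝 (psqrt A).trace) := by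
  have hcont : Continuous fun ε : ℝ => ∑ i, √(hA.1.eigenvalues i + ε) := by fun_prop
  have h0 : (psqrt A).trace = ∑ i, √(hA.1.eigenvalues i + 0) := by
    simpa using trace_psqrt_add_smul_one hA le_rfl
  rw [h0]
  exact (hcont.tendsto 0).mono_left nhdsWithin_le_nhds |>.congr'
    (eventually_nhdsWithin_of_forall fun ε hε => (trace_psqrt_add_smul_one hA hε).symm)

end psqrt

theorem mul_sqrt_add_mul_inv_sqrt {α β : ℝ} (hα : 0 < α) (hβ : 0 < β) :
    α * √(β / (2 * α)) + β / 2 * (√(β / (2 * α)))⁻¹ = √(2 * α * β) := by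
  have hc : 0 < √(β / (2 * α)) := Real.sqrt_pos.mpr (by positivity)
  have hc2 : √(β / (2 * α)) ^ 2 = β / (2 * α) := Real.sq_sqrt (by positivity)
  rw [eq_comm, Real.sqrt_eq_iff_mul_self_eq (by positivity) (by positivity)]
  field_simp
  rw [hc2]
  field_simp
  ring

/-- with `L = √(β/(2α)) · √(X Xᵀ + ε I)`, the quantity
`α tr(L) + (β/2) tr(Xᵀ L⁻¹ X)` is at most `√(2αβ) tr(√(X Xᵀ + ε I))`; in particular
the infimum over `L ≻ 0` of `α tr(L) + (β/2) tr(Xᵀ L⁻¹ X)` is at most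
`√(2αβ) ‖X‖_*` in the limit `ε → 0`. -/
theorem stmt7 {m n : ℕ} (α β : ℝ) (hα : 0 < α) (hβ : 0 < β)
    (X : Matrix (Fin m) (Fin n) ℝ) :
    (∀ ε : ℝ, 0 < ε →
      ∀ L : Matrix (Fin m) (Fin m) ℝ,
        L = Real.sqrt (β / (2 * α)) •
              psqrt (X * Xᵀ + ε • (1 : Matrix (Fin m) (Fin m) ℝ)) →
        α * L.trace + β / 2 * (Xᵀ * L⁻¹ * X).trace
          ≤ Real.sqrt (2 * α * β) *
              (psqrt (X * Xᵀ + ε • (1 : Matrix (Fin m) (Fin m) ℝ))).trace) ∧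
    (∀ δ : ℝ, 0 < δ → ∃ L : Matrix (Fin m) (Fin m) ℝ, L.PosDef ∧
      α * L.trace + β / 2 * (Xᵀ * L⁻¹ * X).trace
        ≤ Real.sqrt (2 * α * β) * nuclearNorm X + δ) := by
  have hXX : (X * Xᵀ).PosSemidef := by simpa using posSemidef_self_mul_conjTranspose X
  have hc : 0 < √(β / (2 * α)) := Real.sqrt_pos.mpr (by positivity)
  have hpd (ε : ℝ) (hε : 0 < ε) : (X * Xᵀ + ε • (1 : Matrix (Fin m) (Fin m) ℝ)).PosDef :=
    PosDef.posSemidef_add hXX (PosDef.one.smul hε)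
  have hbound (ε : ℝ) (hε : 0 < ε) :
      α * (√(β / (2 * α)) • psqrt (X * Xᵀ + ε • 1)).trace
        + β / 2 * (Xᵀ * (√(β / (2 * α)) • psqrt (X * Xᵀ + ε • 1))⁻¹ * X).trace
        ≤ √(2 * α * β) * (psqrt (X * Xᵀ + ε • (1 : Matrix (Fin m) (Fin m) ℝ))).trace :=
    (mul_trace_smul_add_mul_trace_transpose_mul_inv_mul_le (hpd ε hε).psqrt hε.le
      (psqrt_mul_self (hpd ε hε).posSemidef) hc hβ.le).trans_eq
      (by rw [mul_sqrt_add_mul_inv_sqrt hα hβ])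
  refine ⟨fun ε hε L hL => hL ▸ hbound ε hε, fun δ hδ => ?_⟩
  have hlim : Tendsto (fun ε : ℝ => √(2 * α * β) * (psqrt (X * Xᵀ + ε • 1)).trace) (𝓝[>] 0)
      (𝓝 (√(2 * α * β) * nuclearNorm X)) :=
    ((tendsto_trace_psqrt_add_smul_one hXX).mono_left
      (nhdsWithin_mono _ Set.Ioi_subset_Ici_self)).const_mul _
  obtain ⟨ε, hclose, hε⟩ :=
    ((hlim.eventually (gt_mem_nhds (lt_add_of_pos_right _ hδ))).and self_mem_nhdsWithin).exists
  exact ⟨_, (hpd ε hε).psqrt.smul hc, (hbound ε hε).trans hclose.le⟩
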